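/- arXiv:1806.04721 — 2 statements merged into one kernel-verified Lean document; each statement's English description precedes it below -/
import Mathlib

section
/- Let (G_n, δ_n)_{n∈ℕ} be a sequence of proper metric monoids with identity elements e_n, and suppose for each n ∈ ℕ there are ε_n > 0 with Σ_{n=0}^∞ ε_n < ∞ and a (1/ε_n)-local ε_n-almost isometric isomorphism (ς_n, κ_n) from (G_n,δ_n) to (G_{n+1},δ_{n+1}). For k > n set ς_n^k = ς_{k-1} ∘ ⋯ ∘ ς_n, and let H_∞ be the set of regular sequences (g_n)_{n∈ℕ} such that for every ε > 0 there exists N ∈ ℕ with δ_j(g_j, ς_n^j(g_n)) < ε for all n ≥ N and all j > n. Then H_∞ is closed under pointwise multiplication: if (g_n)_{n∈ℕ} and (g'_n)_{n∈ℕ} belong to H_∞, then (g_n g'_n)_{n∈ℕ} belongs to H_∞. -/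
/-- `(ς, κ)` is an `r`-local `ε`-almost isometric isomorphism between the metric
monoids `G` and `H`. -/
def IsLocAlmostIsoIso {G H : Type*} [Monoid G] [MetricSpace G] [Monoid H] [MetricSpace H]
    (ς : G → H) (κ : H → G) (ε r : ℝ) : Prop :=
  ς 1 = 1 ∧ κ 1 = 1 ∧
    (∀ g ∈ Metric.closedBall (1 : G) r, ∀ g' ∈ Metric.closedBall (1 : G) r,
      ∀ h ∈ Metric.closedBall (1 : H) r,
        |dist (ς g * ς g') h - dist (g * g') (κ h)| ≤ ε) ∧
    (∀ g ∈ Metric.closedBall (1 : H) r, ∀ g' ∈ Metric.closedBall (1 : H) r,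
      ∀ h ∈ Metric.closedBall (1 : G) r,
        |dist (κ g * κ g') h - dist (g * g') (ς h)| ≤ ε)
/-- A sequence through a sequence of metric monoids is bounded when
`sup_n δ_n(e_n, g_n) < ∞`. -/
def BoundedSeq {G : ℕ → Type*} [∀ n, Monoid (G n)] [∀ n, MetricSpace (G n)]
    (g : ∀ n, G n) : Prop :=
  ∃ M : ℝ, ∀ n, dist (1 : G n) (g n) ≤ M

/-- A bounded sequence is regular when the right translations by its terms are
asymptotically uniformly equicontinuous. -/
def RegularSeq {G : ℕ → Type*} [∀ n, Monoid (G n)] [∀ n, MetricSpace (G n)]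
    (g : ∀ n, G n) : Prop :=
  BoundedSeq g ∧
    ∀ ε : ℝ, 0 < ε → ∃ ω : ℝ, 0 < ω ∧ ∃ N : ℕ, ∀ n, N ≤ n → ∀ h k : G n,
      dist h k < ω → dist (h * g n) (k * g n) < ε
/-- The compositions `ς_n^{n+k} = ς_{n+k-1} ∘ ⋯ ∘ ς_n`. -/
def compMap {G : ℕ → Type*} (ς : ∀ n, G n → G (n + 1)) (n : ℕ) :
    ∀ k : ℕ, G n → G (n + k)
  | 0 => fun g => g
  | k + 1 => fun g => ς (n + k) (compMap ς n k g)

/-- The map `ς_n^j = ς_{j-1} ∘ ⋯ ∘ ς_n : G_n → G_j` for `n ≤ j`. -/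
def sigmaComp {G : ℕ → Type*} (ς : ∀ n, G n → G (n + 1)) {n j : ℕ} (h : n ≤ j)
    (g : G n) : G j :=
  cast (congrArg G (Nat.add_sub_cancel' h)) (compMap ς n (j - n) g)

/-- Membership in `H_∞`: regular sequences which are asymptotically coherent with the
maps `ς`. -/
def MemHInf {G : ℕ → Type*} [∀ n, Monoid (G n)] [∀ n, MetricSpace (G n)]
    (ς : ∀ n, G n → G (n + 1)) (g : ∀ n, G n) : Prop :=
  RegularSeq g ∧
    ∀ ε : ℝ, 0 < ε → ∃ N : ℕ, ∀ n, N ≤ n → ∀ j : ℕ, ∀ hnj : n < j,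
      dist (g j) (sigmaComp ς hnj.le (g n)) < ε

/-! Bounded and regular sequences are clearly closed under products, so the point is
coherence. The axioms of an `r`-local `ε`-almost isometric isomorphism say that on the ball
of radius `r` the map `ς` moves distances to `1` by at most `ε`, `κ ∘ ς` is `ε`-close to the
identity, and hence `ς` is `2ε`-almost multiplicative. Since `Σ ε_m < ∞`, from some `n` on the
orbits of `g n`, `g' n` and `g n * g' n` under the maps `ς_m` stay inside the balls of radius
`1 / ε_m`, so `ς_n^j` is `2 Σ_{m ≥ n} ε_m`-almost multiplicative on them. The distance from
`g j * g' j` to `ς_n^j (g n * g' n)` is then split into three terms, controlled by the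
regularity of `g'` together with the coherence of `g`, by left invariance together with the
coherence of `g'`, and by this almost multiplicativity. -/

open Filter Finset Metric Topology

lemma dist_one_mul_le {K : Type*} [Monoid K] [MetricSpace K]
    (h_left : ∀ a b c : K, dist (a * b) (a * c) = dist b c) (a b : K) :
    dist (1 : K) (a * b) ≤ dist (1 : K) a + dist (1 : K) b :=
  calc dist (1 : K) (a * b) ≤ dist (1 : K) a + dist a (a * b) := dist_triangle _ _ _
    _ = dist (1 : K) a + dist (1 : K) b := by rw [← h_left a 1 b, mul_one]

lemma Summable.eventually_forall_sum_range_add_lt {f : ℕ → ℝ} (hf : Summable f)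
    (h0 : ∀ i, 0 ≤ f i) {τ : ℝ} (hτ : 0 < τ) :
    ∀ᶠ n in atTop, ∀ k, ∑ i ∈ range k, f (n + i) < τ := by
  filter_upwards [(tendsto_sum_nat_add f).eventually (gt_mem_nhds hτ)] with n hn k
  calc ∑ i ∈ range k, f (n + i) = ∑ i ∈ range k, f (i + n) := by simp only [add_comm]
    _ ≤ ∑' i, f (i + n) :=
      Summable.sum_le_tsum _ (fun i _ => h0 _) ((summable_nat_add_iff n).mpr hf)
    _ < τ := hn

lemma eventually_le_one_div_of_tendsto_zero {f : ℕ → ℝ} (hf : Tendsto f atTop (𝓝 0))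
    (h0 : ∀ n, 0 < f n) (A : ℝ) : ∀ᶠ n in atTop, A ≤ 1 / f n := by
  have hf' : Tendsto f atTop (𝓝[>] 0) :=
    tendsto_nhdsWithin_iff.mpr ⟨hf, Eventually.of_forall h0⟩
  simpa only [one_div, Pi.inv_apply] using tendsto_atTop.mp hf'.inv_tendsto_nhdsGT_zero A

lemma Filter.Eventually.forall_add {p : ℕ → Prop} (h : ∀ᶠ m in atTop, p m) :
    ∀ᶠ n in atTop, ∀ k, p (n + k) :=
  (eventually_forall_ge_atTop.mpr h).mono fun n hn k => hn _ (Nat.le_add_right n k)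

namespace IsLocAlmostIsoIso

variable {A B : Type*} [Monoid A] [MetricSpace A] [Monoid B] [MetricSpace B]
  {ς : A → B} {κ : B → A} {ε r : ℝ}

lemma dist_one_apply_le (h : IsLocAlmostIsoIso ς κ ε r) {x : A} (hx : x ∈ closedBall 1 r) :
    dist 1 (ς x) ≤ dist 1 x + ε := by
  have hr : 0 ≤ r := dist_nonneg.trans (mem_closedBall.mp hx)
  have key := h.2.2.1 x hx 1 (mem_closedBall_self hr) 1 (mem_closedBall_self hr)
  rw [h.1, h.2.1, mul_one, mul_one, dist_comm, dist_comm x] at key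
  linarith [(abs_le.mp key).2]

lemma dist_symm_apply_le (h : IsLocAlmostIsoIso ς κ ε r) {x : A} (hx : x ∈ closedBall 1 r)
    (hςx : ς x ∈ closedBall 1 r) : dist (κ (ς x)) x ≤ ε := by
  have hr : 0 ≤ r := dist_nonneg.trans (mem_closedBall.mp hx)
  have key := h.2.2.2 (ς x) hςx 1 (mem_closedBall_self hr) x hx
  rw [h.2.1, mul_one, mul_one, dist_self, sub_zero, abs_of_nonneg dist_nonneg] at key
  exact key

lemma dist_apply_mul_apply_le (h : IsLocAlmostIsoIso ς κ ε r) {x y z : A}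
    (hx : x ∈ closedBall 1 r) (hy : y ∈ closedBall 1 r) (hz : z ∈ closedBall 1 r)
    (hςz : ς z ∈ closedBall 1 r) : dist (ς x * ς y) (ς z) ≤ dist (x * y) z + 2 * ε := by
  have key := (abs_le.mp (h.2.2.1 x hx y hy (ς z) hςz)).2
  have hκ : dist (x * y) (κ (ς z)) ≤ dist (x * y) z + ε :=
    (dist_triangle _ z _).trans (by rw [dist_comm z]; linarith [h.dist_symm_apply_le hz hςz])
  linarith

end IsLocAlmostIsoIso

section Orbits

variable {G : ℕ → Type*} [∀ n, Monoid (G n)] [∀ n, MetricSpace (G n)]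
  {ς : ∀ n, G n → G (n + 1)} {κ : ∀ n, G (n + 1) → G n} {ε r : ℕ → ℝ} {n : ℕ} {C S : ℝ}

lemma dist_one_compMap_le (h_iso : ∀ m, IsLocAlmostIsoIso (ς m) (κ m) (ε m) (r m))
    (hS : ∀ k, ∑ i ∈ range k, ε (n + i) ≤ S) (hr : ∀ k, C + S ≤ r (n + k))
    {x : G n} (hx : dist 1 x ≤ C) (k : ℕ) :
    dist 1 (compMap ς n k x) ≤ C + ∑ i ∈ range k, ε (n + i) := by
  induction k with
  | zero => simpa [compMap] using hx
  | succ k ih =>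
    have hmem : compMap ς n k x ∈ closedBall 1 (r (n + k)) :=
      mem_closedBall'.mpr (by linarith [hS k, hr k])
    show dist 1 (ς (n + k) (compMap ς n k x)) ≤ _
    rw [sum_range_succ]
    linarith [(h_iso (n + k)).dist_one_apply_le hmem]

lemma compMap_mem_closedBall (h_iso : ∀ m, IsLocAlmostIsoIso (ς m) (κ m) (ε m) (r m))
    (hS : ∀ k, ∑ i ∈ range k, ε (n + i) ≤ S) (hr : ∀ k, C + S ≤ r (n + k))
    {x : G n} (hx : dist 1 x ≤ C) (j k : ℕ) :
    compMap ς n j x ∈ closedBall 1 (r (n + k)) :=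
  mem_closedBall'.mpr (by linarith [dist_one_compMap_le h_iso hS hr hx j, hS j, hr k])

lemma dist_compMap_mul_le (h_iso : ∀ m, IsLocAlmostIsoIso (ς m) (κ m) (ε m) (r m))
    (hS : ∀ k, ∑ i ∈ range k, ε (n + i) ≤ S) (hr : ∀ k, C + S ≤ r (n + k))
    {x y : G n} (hx : dist 1 x ≤ C) (hy : dist 1 y ≤ C) (hxy : dist 1 (x * y) ≤ C) (k : ℕ) :
    dist (compMap ς n k x * compMap ς n k y) (compMap ς n k (x * y)) ≤
      2 * ∑ i ∈ range k, ε (n + i) := by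
  induction k with
  | zero => simp [compMap]
  | succ k ih =>
    have hmem {z : G n} (hz : dist 1 z ≤ C) := compMap_mem_closedBall h_iso hS hr hz
    have step := (h_iso (n + k)).dist_apply_mul_apply_le (hmem hx k k) (hmem hy k k)
      (hmem hxy k k) (hmem hxy (k + 1) k)
    rw [sum_range_succ]
    exact step.trans (by linarith)

end Orbits

lemma sigmaComp_add {G : ℕ → Type*} (ς : ∀ n, G n → G (n + 1)) (n k : ℕ) (x : G n) :
    sigmaComp ς (Nat.le_add_right n k) x = compMap ς n k x := by
  have key : ∀ m (e : n + m = n + k), m = k →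
      cast (congrArg G e) (compMap ς n m x) = compMap ς n k x := by
    rintro m e rfl; rfl
  exact key _ (Nat.add_sub_cancel' (Nat.le_add_right n k)) (by omega)

section Sequences

variable {G : ℕ → Type*} [∀ n, Monoid (G n)] [∀ n, MetricSpace (G n)]
  {ς : ∀ n, G n → G (n + 1)} {g g' : ∀ n, G n}

/-- The coherence condition of `H_∞`, indexed by the number `k` of steps instead of the
target `j = n + k`. -/
def AsympCoherent (ς : ∀ n, G n → G (n + 1)) (g : ∀ n, G n) : Prop :=
  ∀ δ : ℝ, 0 < δ → ∀ᶠ n in atTop, ∀ k, dist (g (n + k)) (compMap ς n k (g n)) < δ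

lemma memHInf_iff : MemHInf ς g ↔ RegularSeq g ∧ AsympCoherent ς g := by
  refine and_congr_right fun _ => forall₂_congr fun δ hδ => ?_
  rw [eventually_atTop]
  refine exists_congr fun N => forall₂_congr fun n _ => ⟨fun h k => ?_, fun h j hnj => ?_⟩
  · rcases k.eq_zero_or_pos with rfl | hk
    · simpa [compMap] using hδ
    · simpa only [sigmaComp_add] using h (n + k) (by omega)
  · obtain ⟨k, rfl⟩ := Nat.exists_eq_add_of_le hnj.le
    simpa only [sigmaComp_add] using h k

lemma BoundedSeq.mul (h_left : ∀ n, ∀ a b c : G n, dist (a * b) (a * c) = dist b c)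
    (hg : BoundedSeq g) (hg' : BoundedSeq g') : BoundedSeq fun n => g n * g' n := by
  obtain ⟨⟨M, hM⟩, ⟨M', hM'⟩⟩ := And.intro hg hg'
  exact ⟨M + M', fun n => (dist_one_mul_le (h_left n) _ _).trans (add_le_add (hM n) (hM' n))⟩

lemma RegularSeq.mul (h_left : ∀ n, ∀ a b c : G n, dist (a * b) (a * c) = dist b c)
    (hg : RegularSeq g) (hg' : RegularSeq g') : RegularSeq fun n => g n * g' n := by
  refine ⟨hg.1.mul h_left hg'.1, fun δ hδ => ?_⟩
  obtain ⟨ω', hω', N', h'⟩ := hg'.2 δ hδ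
  obtain ⟨ω, hω, N, h⟩ := hg.2 ω' hω'
  refine ⟨ω, hω, max N N', fun n hn a b hab => ?_⟩
  simpa only [mul_assoc] using
    h' n (le_of_max_le_right hn) _ _ (h n (le_of_max_le_left hn) a b hab)

lemma AsympCoherent.mul (h_left : ∀ n, ∀ a b c : G n, dist (a * b) (a * c) = dist b c)
    {ε : ℕ → ℝ} (hε : ∀ n, 0 < ε n) (h_sum : Summable ε)
    {κ : ∀ n, G (n + 1) → G n}
    (h_iso : ∀ n, IsLocAlmostIsoIso (ς n) (κ n) (ε n) (1 / ε n))
    (hb : BoundedSeq g) (hreg' : RegularSeq g')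
    (hg : AsympCoherent ς g) (hg' : AsympCoherent ς g') :
    AsympCoherent ς fun n => g n * g' n := by
  intro δ hδ
  obtain ⟨⟨M, hM⟩, ⟨M', hM'⟩⟩ := And.intro hb hreg'.1
  have hM0 : 0 ≤ M := dist_nonneg.trans (hM 0)
  have hM'0 : 0 ≤ M' := dist_nonneg.trans (hM' 0)
  have hprod n : dist 1 (g n * g' n) ≤ M + M' :=
    (dist_one_mul_le (h_left n) _ _).trans (add_le_add (hM n) (hM' n))
  obtain ⟨ω, hω, N, hN⟩ := hreg'.2 (δ / 3) (by positivity)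
  have hreg : ∀ᶠ m in atTop, ∀ a b : G m, dist a b < ω → dist (a * g' m) (b * g' m) < δ / 3 :=
    eventually_atTop.mpr ⟨N, hN⟩
  have hrad := eventually_le_one_div_of_tendsto_zero h_sum.tendsto_atTop_zero hε (M + M' + δ / 6)
  filter_upwards [hreg.forall_add, hrad.forall_add, hg ω hω, hg' (δ / 3) (by positivity),
    h_sum.eventually_forall_sum_range_add_lt (fun i => (hε i).le) (by positivity : 0 < δ / 6)]
    with n hreg_n hrad_n hx hy htail k
  set x := compMap ς n k (g n)
  set y := compMap ς n k (g' n)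
  have hmul := dist_compMap_mul_le h_iso (fun k => (htail k).le) hrad_n
    (by linarith [hM n]) (by linarith [hM' n]) (hprod n) k
  calc dist (g (n + k) * g' (n + k)) (compMap ς n k (g n * g' n))
      ≤ dist (g (n + k) * g' (n + k)) (x * g' (n + k)) + dist (x * g' (n + k)) (x * y)
        + dist (x * y) (compMap ς n k (g n * g' n)) := dist_triangle4 _ _ _ _
    _ < δ / 3 + δ / 3 + 2 * (δ / 6) := by
      rw [h_left]
      gcongr
      exacts [hreg_n k _ _ (hx k), hy k, hmul.trans_lt (by linarith [htail k])]
    _ = δ := by ring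

end Sequences

theorem memHInf_mul_general
    (G : ℕ → Type*) [∀ n, Monoid (G n)] [∀ n, MetricSpace (G n)]
    (h_left : ∀ n, ∀ g h k : G n, dist (g * h) (g * k) = dist h k)
    (ε : ℕ → ℝ) (hε : ∀ n, 0 < ε n)
    (ς : ∀ n, G n → G (n + 1)) (κ : ∀ n, G (n + 1) → G n)
    (h_iso : ∀ n, IsLocAlmostIsoIso (ς n) (κ n) (ε n) (1 / ε n))
    (h_sum : Summable ε)
    (g g' : ∀ n, G n) (hg : MemHInf ς g) (hg' : MemHInf ς g') :
    MemHInf ς (fun n => g n * g' n) := by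
  rw [memHInf_iff] at hg hg' ⊢
  exact ⟨hg.1.mul h_left hg'.1,
    hg.2.mul h_left hε h_sum h_iso hg.1.1 hg'.1 hg'.2⟩

/-- Given a sequence of proper metric monoids linked by
`(1/ε_n)`-local `ε_n`-almost isometric isomorphisms with `Σ ε_n < ∞`, the set `H_∞`
is closed under pointwise multiplication. -/
theorem memHInf_mul
    (G : ℕ → Type*) [∀ n, Monoid (G n)] [∀ n, MetricSpace (G n)]
    (h_left : ∀ n, ∀ g h k : G n, dist (g * h) (g * k) = dist h k)
    (h_cont : ∀ n, Continuous fun p : G n × G n => p.1 * p.2)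
    (h_proper : ∀ n, ProperSpace (G n))
    (ε : ℕ → ℝ) (hε : ∀ n, 0 < ε n)
    (ς : ∀ n, G n → G (n + 1)) (κ : ∀ n, G (n + 1) → G n)
    (h_iso : ∀ n, IsLocAlmostIsoIso (ς n) (κ n) (ε n) (1 / ε n))
    (h_sum : Summable ε)
    (g g' : ∀ n, G n) (hg : MemHInf ς g) (hg' : MemHInf ς g') :
    MemHInf ς (fun n => g n * g' n) :=
  memHInf_mul_general G h_left ε hε ς κ h_iso h_sum g g' hg hg'
end

section
/- Let (G_n, δ_n)_{n∈ℕ} be a sequence of proper metric groups that is Cauchy for the Gromov-Hausdorff monoid distance Υ, and suppose that for all ε > 0 there exist ω > 0 and N ∈ ℕ such that for all n ≥ N and all g, h ∈ G_n, if δ_n(g,h) < ω then δ_n(g⁻¹, h⁻¹) < ε. Then there exists a proper metric group (G, δ) such that lim_{n→∞} Υ((G_n,δ_n),(G,δ)) = 0. -/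
/-- The Gromov-Hausdorff monoid distance `Υ` between two (proper) metric monoids:
`min {√2/2, inf {ε > 0 : ∃ a (1/ε)-local ε-almost isometric isomorphism}}`. -/
noncomputable def Upsilon (G H : Type*) [Monoid G] [MetricSpace G] [Monoid H]
    [MetricSpace H] : ℝ :=
  sInf ({ε : ℝ | 0 < ε ∧ ∃ (ς : G → H) (κ : H → G), IsLocAlmostIsoIso ς κ ε (1 / ε)} ∪
    {Real.sqrt 2 / 2})

/-!
Pass to a subsequence `G (n k)` along which consecutive groups are `2⁻¹ ^ (k + 1)`-close for `Υ`
and fix the corresponding almost isometric isomorphisms `σ k : G (n k) → G (n (k + 1))`,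
`τ k` backwards. The errors are summable, so the composites of the `σ`'s from level `k` on stay
`2⁻¹ ^ k`-almost isometric and multiplicative on balls of radius about `2 ^ k`. The limit group
consists of bounded sequences `x k ∈ G (n k)` that are asymptotically compatible with these
composites, with `dist x y = lim dist (x k) (y k)`, modulo distance zero; the equicontinuity of
inversion is what makes products and inverses of compatible sequences compatible again. Pushing
`G (n k)` forward is an almost isometric isomorphism onto the limit for large `k`, the `τ`'s
providing almost surjectivity. Hence balls of the limit are approximated by images of compact
balls, so that the limit, which is complete by a diagonal argument, is proper; composing with the
almost isomorphisms between `G m` and `G (n k)` gives `Υ (G m, limit) → 0`.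
-/

open Filter Metric Topology

section LeftInvariant

variable {G : Type*} [Group G] [PseudoMetricSpace G] [IsIsometricSMul G G]

theorem dist_inv_one (g : G) : dist g⁻¹ 1 = dist g 1 := by
  rw [← dist_mul_left g, mul_inv_cancel, mul_one, dist_comm]

theorem dist_mul_one_le (g h : G) : dist (g * h) 1 ≤ dist g 1 + dist h 1 := by
  have h₁ : dist (g * h) g = dist h 1 := by rw [← dist_mul_left g h 1, mul_one]
  linarith [dist_triangle (g * h) g 1]

theorem dist_mul_right_lt_of_inv {ε ω ω' : ℝ}
    (hω : ∀ a b : G, dist a b < ω → dist a⁻¹ b⁻¹ < ε)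
    (hω' : ∀ a b : G, dist a b < ω' → dist a⁻¹ b⁻¹ < ω) {a b : G} (x : G)
    (hab : dist a b < ω') : dist (a * x) (b * x) < ε := by
  simpa using hω (x⁻¹ * a⁻¹) (x⁻¹ * b⁻¹) (by rw [dist_mul_left]; exact hω' a b hab)

theorem continuous_mul_of_dist_mul_right_le
    (h : ∀ ε > 0, ∃ ω > 0, ∀ x y z : G, dist x y < ω → dist (x * z) (y * z) ≤ ε) :
    Continuous fun p : G × G => p.1 * p.2 := by
  rw [Metric.continuous_iff]
  rintro ⟨x, y⟩ ε hε
  obtain ⟨ω, hω, hr⟩ := h (ε / 2) (half_pos hε)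
  refine ⟨min ω (ε / 2), by positivity, fun ⟨a, b⟩ hab => ?_⟩
  rw [Prod.dist_eq, max_lt_iff, lt_min_iff, lt_min_iff] at hab
  have := hr a x y hab.1.1
  have := dist_triangle (a * b) (a * y) (x * y)
  rw [dist_mul_left] at this
  simp only
  linarith [hab.2.2]

end LeftInvariant

namespace IsLocAlmostIsoIso

section Monoid

variable {A B C : Type*} [Monoid A] [MetricSpace A] [Monoid B] [MetricSpace B]
  [Monoid C] [MetricSpace C] {ς : A → B} {κ : B → A} {ε r : ℝ}

theorem symm (P : IsLocAlmostIsoIso ς κ ε r) : IsLocAlmostIsoIso κ ς ε r :=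
  ⟨P.2.1, P.1, P.2.2.2, P.2.2.1⟩

theorem mono (P : IsLocAlmostIsoIso ς κ ε r) {ε' r' : ℝ} (hε : ε ≤ ε') (hr : r' ≤ r) :
    IsLocAlmostIsoIso ς κ ε' r' := by
  have hA : closedBall (1 : A) r' ⊆ closedBall 1 r := closedBall_subset_closedBall hr
  have hB : closedBall (1 : B) r' ⊆ closedBall 1 r := closedBall_subset_closedBall hr
  exact ⟨P.1, P.2.1,
    fun g hg g' hg' h hh => (P.2.2.1 g (hA hg) g' (hA hg') h (hB hh)).trans hε,
    fun g hg g' hg' h hh => (P.2.2.2 g (hB hg) g' (hB hg') h (hA hh)).trans hε⟩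

protected theorem id (r : ℝ) : IsLocAlmostIsoIso (id : A → A) id 0 r :=
  ⟨rfl, rfl, fun _ _ _ _ _ _ => by simp, fun _ _ _ _ _ _ => by simp⟩

variable (P : IsLocAlmostIsoIso ς κ ε r)
include P

theorem abs_dist_apply_sub_le {g : A} {h : B} (hg : dist g 1 ≤ r) (hh : dist h 1 ≤ r) :
    |dist (ς g) h - dist g (κ h)| ≤ ε := by
  have hr : (1 : A) ∈ closedBall 1 r := mem_closedBall_self (dist_nonneg.trans hg)
  simpa [P.1] using P.2.2.1 g hg 1 hr h hh

theorem dist_one_le {g : A} (hg : dist g 1 ≤ r) : dist (ς g) 1 ≤ dist g 1 + ε := by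
  have := P.abs_dist_apply_sub_le hg (h := 1) (by simpa using dist_nonneg.trans hg)
  rw [P.2.1] at this
  linarith [(abs_le.1 this).2]

theorem dist_comp_apply_le {g : A} (hε : 0 ≤ ε) (hg : dist g 1 + ε ≤ r) :
    dist g (κ (ς g)) ≤ ε := by
  simpa using P.abs_dist_apply_sub_le (g := g) (h := ς g) (by linarith)
    ((P.dist_one_le (by linarith)).trans hg)

theorem abs_dist_map_sub_le {g g' : A} (hε : 0 ≤ ε) (hg : dist g 1 + ε ≤ r)
    (hg' : dist g' 1 + ε ≤ r) : |dist (ς g) (ς g') - dist g g'| ≤ 2 * ε := by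
  have h₁ := P.abs_dist_apply_sub_le (g := g) (h := ς g') (by linarith)
    ((P.dist_one_le (by linarith)).trans hg')
  have h₂ : |dist g (κ (ς g')) - dist g g'| ≤ ε := by
    rw [dist_comm g, dist_comm g]
    exact (abs_dist_sub_le _ _ _).trans
      ((dist_comm _ _).trans_le (P.dist_comp_apply_le hε hg'))
  linarith [abs_sub_le (dist (ς g) (ς g')) (dist g (κ (ς g'))) (dist g g')]

theorem dist_map_mul_le {g g' : A} (hε : 0 ≤ ε) (hg : dist g 1 ≤ r) (hg' : dist g' 1 ≤ r)
    (hgg' : dist (g * g') 1 + ε ≤ r) : dist (ς (g * g')) (ς g * ς g') ≤ 2 * ε := by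
  have h₁ := P.2.2.1 g hg g' hg' (ς (g * g')) ((P.dist_one_le (by linarith)).trans hgg')
  have h₂ := P.dist_comp_apply_le hε hgg'
  rw [dist_comm]
  linarith [(abs_le.1 h₁).2]

omit P in
theorem comp {ι : B → C} {π : C → B} {ε' r' s : ℝ} (P : IsLocAlmostIsoIso ς κ ε r)
    (Q : IsLocAlmostIsoIso ι π ε' r') (hε : 0 ≤ ε) (hε' : 0 ≤ ε') (hs : s + ε' ≤ r)
    (hs' : s + ε ≤ r') : IsLocAlmostIsoIso (ι ∘ ς) (κ ∘ π) (ε + ε') s := by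
  have hsr : s ≤ r := by linarith
  have hsr' : s ≤ r' := by linarith
  have hς {g : A} (hg : dist g 1 ≤ s) : ς g ∈ closedBall (1 : B) r' :=
    (P.dist_one_le (hg.trans hsr)).trans (by linarith)
  have hπ {h : C} (hh : dist h 1 ≤ s) : π h ∈ closedBall (1 : B) r :=
    (Q.symm.dist_one_le (hh.trans hsr')).trans (by linarith)
  refine ⟨by simp [P.1, Q.1], by simp [P.2.1, Q.2.1], fun g hg g' hg' h hh => ?_,
    fun g hg g' hg' h hh => ?_⟩ <;> rw [mem_closedBall] at hg hg' hh <;>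
    simp only [Function.comp_apply]
  · have h₁ := Q.2.2.1 (ς g) (hς hg) (ς g') (hς hg') h (hh.trans hsr')
    have h₂ := P.2.2.1 g (hg.trans hsr) g' (hg'.trans hsr) (π h) (hπ hh)
    linarith [abs_sub_le (dist (ι (ς g) * ι (ς g')) h) (dist (ς g * ς g') (π h))
      (dist (g * g') (κ (π h)))]
  · have h₁ := P.2.2.2 (π g) (hπ hg) (π g') (hπ hg') h (hh.trans hsr)
    have h₂ := Q.2.2.2 g (hg.trans hsr') g' (hg'.trans hsr') (ς h) (hς hh)
    linarith [abs_sub_le (dist (κ (π g) * κ (π g')) h) (dist (π g * π g') (ς h))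
      (dist (g * g') (ι (ς h)))]

end Monoid

theorem dist_map_inv_le {A B : Type*} [Group A] [MetricSpace A] [IsIsometricSMul A A] [Group B]
    [MetricSpace B] [IsIsometricSMul B B] {ς : A → B} {κ : B → A} {ε r : ℝ}
    (P : IsLocAlmostIsoIso ς κ ε r) {g : A} (hε : 0 ≤ ε) (hg : dist g 1 + ε ≤ r) :
    dist (ς g⁻¹) (ς g)⁻¹ ≤ 2 * ε := by
  have h := P.dist_map_mul_le hε (g := g) (g' := g⁻¹) (by linarith)
    (by rw [dist_inv_one]; linarith)
    (by rw [mul_inv_cancel, dist_self]; linarith [dist_nonneg (x := g) (y := 1)])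
  rwa [mul_inv_cancel, P.1, ← mul_inv_cancel (ς g), dist_mul_left, dist_comm] at h

end IsLocAlmostIsoIso

section Upsilon

variable {A B : Type*} [Monoid A] [MetricSpace A] [Monoid B] [MetricSpace B]

theorem upsilon_nonneg : 0 ≤ Upsilon A B :=
  le_csInf (Set.singleton_nonempty _).inr
    (by rintro x (hx | rfl); exacts [hx.1.le, by positivity])

theorem upsilon_le {ς : A → B} {κ : B → A} {ε : ℝ} (hε : 0 < ε)
    (P : IsLocAlmostIsoIso ς κ ε ε⁻¹) : Upsilon A B ≤ ε :=
  csInf_le ⟨0, by rintro x (hx | rfl); exacts [hx.1.le, by positivity]⟩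
    (Or.inl ⟨hε, ς, κ, by rwa [one_div]⟩)

theorem exists_isLocAlmostIsoIso_of_upsilon_lt {c : ℝ} (hc : c ≤ Real.sqrt 2 / 2)
    (h : Upsilon A B < c) :
    ∃ (ς : A → B) (κ : B → A), IsLocAlmostIsoIso ς κ c c⁻¹ := by
  obtain ⟨x, hx | rfl, hxc⟩ := exists_lt_of_csInf_lt (Set.singleton_nonempty _).inr h
  · obtain ⟨hx0, ς, κ, P⟩ := hx
    exact ⟨ς, κ, P.mono hxc.le (by rw [one_div]; exact inv_anti₀ hx0 hxc.le)⟩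
  · exact absurd hc hxc.not_ge

end Upsilon

theorem inv_two_pow_le_one (k : ℕ) : (2 : ℝ)⁻¹ ^ k ≤ 1 :=
  pow_le_one₀ (by norm_num) (by norm_num)

theorem inv_two_pow_anti {k j : ℕ} (h : k ≤ j) : (2 : ℝ)⁻¹ ^ j ≤ 2⁻¹ ^ k :=
  pow_le_pow_of_le_one (by norm_num) (by norm_num) h

theorem inv_two_pow_le_sqrt_two_div_two (k : ℕ) :
    (2 : ℝ)⁻¹ ^ (k + 1) ≤ Real.sqrt 2 / 2 := by
  have := inv_two_pow_anti (Nat.le_add_left 1 k)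
  linarith [Real.one_lt_sqrt_two, pow_one (2 : ℝ)⁻¹]

theorem inv_inv_two_pow (k : ℕ) : ((2 : ℝ)⁻¹ ^ k)⁻¹ = 2 ^ k := by rw [inv_pow, inv_inv]

theorem eventually_le_two_pow_succ (C : ℝ) : ∀ᶠ k : ℕ in atTop, C ≤ (2 : ℝ) ^ (k + 1) :=
  ((tendsto_pow_atTop_atTop_of_one_lt one_lt_two).comp
    (tendsto_add_atTop_nat 1)).eventually_ge_atTop C

theorem eventually_inv_two_pow_le {ε : ℝ} (hε : 0 < ε) :
    ∀ᶠ k : ℕ in atTop, (2 : ℝ)⁻¹ ^ k ≤ ε :=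
  (tendsto_pow_atTop_nhds_zero_of_lt_one (by norm_num) (by norm_num)).eventually_le_const hε

section SeparationQuotient

open SeparationQuotient

instance {X : Type*} [PseudoMetricSpace X] [ProperSpace X] :
    ProperSpace (SeparationQuotient X) where
  isCompact_closedBall x r := by
    obtain ⟨z, rfl⟩ := surjective_mk x
    have : closedBall (mk z) r = mk '' closedBall z r := by
      rw [← Set.image_preimage_eq (closedBall (mk z) r) surjective_mk]
      congr 1
    rw [this]
    exact (isCompact_closedBall z r).image continuous_mk

instance {M : Type*} [Mul M] [PseudoMetricSpace M] [ContinuousMul M] [IsIsometricSMul M M] :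
    IsIsometricSMul (SeparationQuotient M) (SeparationQuotient M) :=
  ⟨fun g => Isometry.of_dist_eq fun x y => by
    obtain ⟨g, rfl⟩ := surjective_mk g
    obtain ⟨x, rfl⟩ := surjective_mk x
    obtain ⟨y, rfl⟩ := surjective_mk y
    simp only [smul_eq_mul, ← mk_mul, dist_mk, dist_mul_left]⟩

end SeparationQuotient

theorem exists_isLocAlmostIsoIso_of_approx {A L : Type*} [Group A] [MetricSpace A]
    [IsIsometricSMul A A] [Group L] [MetricSpace L] [IsIsometricSMul L L] (ι : A → L)
    {δ η r R : ℝ} (hι : ι 1 = 1)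
    (hdist : ∀ a a' : A, dist a 1 ≤ 2 * R → dist a' 1 ≤ 2 * R →
      |dist (ι a) (ι a') - dist a a'| ≤ δ)
    (hmul : ∀ a a' : A, dist a 1 ≤ R → dist a' 1 ≤ R →
      dist (ι (a * a')) (ι a * ι a') ≤ δ)
    (happrox : ∀ x : L, dist x 1 ≤ r → ∃ a : A, dist a 1 ≤ R ∧ dist x (ι a) ≤ δ)
    (hright : ∀ x y z : L, dist x y ≤ δ → dist (x * z) (y * z) ≤ η) (hrR : r ≤ R) :
    ∃ π : L → A, IsLocAlmostIsoIso ι π (3 * δ + η) r := by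
  classical
  choose! π₀ hπ₀ using happrox
  obtain ⟨π, hπ₁, hπ⟩ : ∃ π : L → A, π 1 = 1 ∧
      ∀ x, dist x 1 ≤ r → dist (π x) 1 ≤ R ∧ dist x (ι (π x)) ≤ δ := by
    refine ⟨Function.update π₀ 1 1, by simp, fun x hx => ?_⟩
    rcases eq_or_ne x 1 with rfl | hx₁
    · simp only [Function.update_self, dist_self, hι]
      exact ⟨hrR.trans' (by simpa using hx), dist_nonneg.trans (hπ₀ 1 hx).2⟩
    · simpa [Function.update_of_ne hx₁] using hπ₀ x hx
  refine ⟨π, hι, hπ₁, fun g hg g' hg' h hh => ?_, fun g hg g' hg' h hh => ?_⟩ <;>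
    rw [mem_closedBall] at hg hg' hh
  · obtain ⟨ha, hha⟩ := hπ h hh
    set a := π h
    have hη : 0 ≤ η := dist_nonneg.trans (hright 1 1 1 (by simpa using dist_nonneg.trans hha))
    have e₁ : |dist (ι g * ι g') h - dist (ι (g * g')) h| ≤ δ :=
      (abs_dist_sub_le _ _ _).trans
        ((dist_comm _ _).trans_le (hmul g g' (by linarith) (by linarith)))
    have e₂ : |dist (ι (g * g')) h - dist (ι (g * g')) (ι a)| ≤ δ := by
      simpa [Real.dist_eq] using (dist_dist_dist_le_right (ι (g * g')) h (ι a)).trans hha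
    have e₃ := hdist (g * g') a (by linarith [dist_mul_one_le g g'])
      (by linarith [dist_nonneg (x := g) (y := 1)])
    rw [abs_le] at e₁ e₂ e₃ ⊢
    constructor <;> linarith
  · obtain ⟨ha, hga⟩ := hπ g hg
    obtain ⟨ha', hga'⟩ := hπ g' hg'
    set a := π g
    set a' := π g'
    have f₁ := hdist (a * a') h (by linarith [dist_mul_one_le a a'])
      (by linarith [dist_nonneg (x := a) (y := 1)])
    have f₂ : |dist (ι (a * a')) (ι h) - dist (ι a * ι a') (ι h)| ≤ δ :=
      (abs_dist_sub_le _ _ _).trans (hmul a a' ha ha')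
    have hprod : dist (ι a * ι a') (g * g') ≤ η + δ := by
      have := hright (ι a) g (ι a') (by rwa [dist_comm])
      have := dist_triangle (ι a * ι a') (g * ι a') (g * g')
      rw [dist_mul_left, dist_comm (ι a')] at this
      linarith
    have f₃ : |dist (ι a * ι a') (ι h) - dist (g * g') (ι h)| ≤ η + δ :=
      (abs_dist_sub_le _ _ _).trans hprod
    rw [abs_le] at f₁ f₂ f₃ ⊢
    constructor <;> linarith

structure AlmostIsoChain (H : ℕ → Type*) [∀ k, Group (H k)] [∀ k, MetricSpace (H k)] where
  σ : ∀ k, H k → H (k + 1)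
  τ : ∀ k, H (k + 1) → H k
  isLocAlmostIsoIso : ∀ k, IsLocAlmostIsoIso (σ k) (τ k) (2⁻¹ ^ (k + 1)) (2 ^ (k + 1))
  inv_equicontinuous : ∀ ε > 0, ∃ ω > 0, ∀ᶠ k in atTop,
    ∀ g h : H k, dist g h < ω → dist g⁻¹ h⁻¹ < ε

namespace AlmostIsoChain

variable {H : ℕ → Type*} [∀ k, Group (H k)] [∀ k, MetricSpace (H k)] (c : AlmostIsoChain H)

def fwd {k j : ℕ} (h : k ≤ j) : H k → H j :=
  Nat.leRecOn h fun {m} => c.σ m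

def bwd {k j : ℕ} (h : k ≤ j) : H j → H k :=
  Nat.leRecOn (C := fun m => H m → H k) h (fun {m} f => f ∘ c.τ m) id

theorem fwd_self {k : ℕ} (h : k ≤ k) : c.fwd h = id :=
  funext fun g => Nat.leRecOn_self (C := H) g

theorem fwd_succ {k j : ℕ} (h : k ≤ j) (h' : k ≤ j + 1) : c.fwd h' = c.σ j ∘ c.fwd h :=
  funext fun g => Nat.leRecOn_succ (C := H) h g

theorem fwd_trans {k l j : ℕ} (h : k ≤ l) (h' : l ≤ j) (g : H k) :
    c.fwd (h.trans h') g = c.fwd h' (c.fwd h g) :=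
  Nat.leRecOn_trans (C := H) h h' g

theorem bwd_self {k : ℕ} (h : k ≤ k) : c.bwd h = id :=
  Nat.leRecOn_self (C := fun m => H m → H k) _

theorem bwd_succ {k j : ℕ} (h : k ≤ j) (h' : k ≤ j + 1) : c.bwd h' = c.bwd h ∘ c.τ j :=
  Nat.leRecOn_succ (C := fun m => H m → H k) h _

-- The radius shrinks by `2⁻¹ ^ (j + 1)` at step `j`, which pays for the error of that step.
theorem isLocAlmostIsoIso_fwd_bwd' {k j : ℕ} (h : k ≤ j) :
    IsLocAlmostIsoIso (c.fwd h) (c.bwd h) (2⁻¹ ^ k - 2⁻¹ ^ j)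
      (2 ^ (k + 1) - 2 + 2⁻¹ ^ j) := by
  induction j, h using Nat.le_induction with
  | base => simpa [fwd_self, bwd_self] using IsLocAlmostIsoIso.id (A := H k) _
  | succ j hkj ih =>
    have hj : (2 : ℝ)⁻¹ ^ j = 2 * 2⁻¹ ^ (j + 1) := by ring
    have hkj' := inv_two_pow_anti hkj
    have hcap : (2 : ℝ) ^ (k + 1) ≤ 2 ^ (j + 1) := pow_le_pow_right₀ (by norm_num) (by omega)
    have hpos : (0 : ℝ) < 2⁻¹ ^ (j + 1) := by positivity
    have := ih.comp (c.isLocAlmostIsoIso j) (by linarith) (by positivity)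
      (s := 2 ^ (k + 1) - 2 + 2⁻¹ ^ (j + 1)) (by linarith)
      (by linarith [inv_two_pow_le_one k, inv_two_pow_le_one (j + 1)])
    rw [c.fwd_succ hkj, c.bwd_succ hkj]
    exact this.mono (by linarith) le_rfl

theorem isLocAlmostIsoIso_fwd_bwd {k j : ℕ} (h : k ≤ j) :
    IsLocAlmostIsoIso (c.fwd h) (c.bwd h) (2⁻¹ ^ k) (2 ^ (k + 1) - 2) :=
  (c.isLocAlmostIsoIso_fwd_bwd' h).mono (by linarith [pow_pos (by norm_num : (0 : ℝ) < 2⁻¹) j])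
    (by linarith [pow_pos (by norm_num : (0 : ℝ) < 2⁻¹) j])

theorem fwd_one {k j : ℕ} (h : k ≤ j) : c.fwd h 1 = 1 := (c.isLocAlmostIsoIso_fwd_bwd h).1

structure CoherentSeq where
  seq : ∀ k, H k
  bounded : ∃ C, ∀ᶠ k in atTop, dist (seq k) 1 ≤ C
  coherent : ∀ ε > 0, ∀ᶠ k in atTop, ∀ j (h : k ≤ j),
    dist (c.fwd h (seq k)) (seq j) ≤ ε

attribute [ext] CoherentSeq

namespace CoherentSeq

variable {c}

instance : One c.CoherentSeq :=
  ⟨⟨1, ⟨0, by simp⟩, fun ε hε => by simp [fwd_one, hε.le]⟩⟩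

@[simp] theorem one_seq (k : ℕ) : (1 : c.CoherentSeq).seq k = 1 := rfl

theorem cauchySeq_dist (x y : c.CoherentSeq) :
    CauchySeq fun k => dist (x.seq k) (y.seq k) := by
  refine Metric.cauchySeq_iff'.2 fun ε hε => ?_
  obtain ⟨C, hC⟩ := x.bounded
  obtain ⟨C', hC'⟩ := y.bounded
  obtain ⟨N, hxN, hyN, hcap, hsmall, hx, hy⟩ := (hC.and <| hC'.and <|
    (eventually_le_two_pow_succ (C + C' + 3)).and <|
    (eventually_inv_two_pow_le (by positivity : 0 < ε / 8)).and <|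
    (x.coherent (ε / 4) (by positivity)).and (y.coherent (ε / 4) (by positivity))).exists
  refine ⟨N, fun j hj => ?_⟩
  have hfwd := (c.isLocAlmostIsoIso_fwd_bwd hj).abs_dist_map_sub_le (g := x.seq N)
    (g' := y.seq N) (by positivity)
    (by linarith [dist_nonneg (x := y.seq N) (y := 1), inv_two_pow_le_one N])
    (by linarith [dist_nonneg (x := x.seq N) (y := 1), inv_two_pow_le_one N])
  have hlim := dist_dist_dist_le (x.seq j) (y.seq j) (c.fwd hj (x.seq N)) (c.fwd hj (y.seq N))
  rw [dist_comm (x.seq j) (c.fwd hj _), dist_comm (y.seq j) (c.fwd hj _)] at hlim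
  rw [Real.dist_eq] at hlim ⊢
  linarith [abs_sub_le (dist (x.seq j) (y.seq j)) (dist (c.fwd hj (x.seq N)) (c.fwd hj (y.seq N)))
    (dist (x.seq N) (y.seq N)), hx j hj, hy j hj]

noncomputable instance : PseudoMetricSpace c.CoherentSeq where
  dist x y := limUnder atTop fun k => dist (x.seq k) (y.seq k)
  dist_self x := tendsto_nhds_unique (x.cauchySeq_dist x).tendsto_limUnder (by simp)
  dist_comm x y := by simp only [dist_comm]
  dist_triangle x y z := le_of_tendsto_of_tendsto' (x.cauchySeq_dist z).tendsto_limUnder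
    ((x.cauchySeq_dist y).tendsto_limUnder.add (y.cauchySeq_dist z).tendsto_limUnder)
    fun _ => dist_triangle _ _ _

theorem tendsto_dist (x y : c.CoherentSeq) :
    Tendsto (fun k => dist (x.seq k) (y.seq k)) atTop (𝓝 (dist x y)) :=
  (x.cauchySeq_dist y).tendsto_limUnder

theorem dist_le_of_eventually {x y : c.CoherentSeq} {b : ℝ}
    (h : ∀ᶠ k in atTop, dist (x.seq k) (y.seq k) ≤ b) : dist x y ≤ b :=
  le_of_tendsto (tendsto_dist x y) h

theorem eventually_dist_lt {x y : c.CoherentSeq} {b : ℝ} (h : dist x y < b) :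
    ∀ᶠ k in atTop, dist (x.seq k) (y.seq k) < b :=
  (tendsto_dist x y).eventually_lt_const h

end CoherentSeq

-- The cutoff keeps `embed` total; below it, `fwd` is controlled by `isLocAlmostIsoIso_fwd_bwd`.
noncomputable def embed (k : ℕ) (g : H k) : c.CoherentSeq :=
  if hg : dist g 1 + 3 ≤ 2 ^ (k + 1) then
    { seq := fun j => if h : k ≤ j then c.fwd h g else 1
      bounded := ⟨dist g 1 + 1, (eventually_ge_atTop k).mono fun j hj => by
        rw [dif_pos hj]
        linarith [(c.isLocAlmostIsoIso_fwd_bwd hj).dist_one_le (g := g) (by linarith),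
          inv_two_pow_le_one k]⟩
      coherent := fun ε hε => (eventually_ge_atTop k).mono fun l hl j hlj => by
        rw [dif_pos hl, dif_pos (hl.trans hlj), ← c.fwd_trans]
        simpa using hε.le }
  else 1

theorem embed_seq {k : ℕ} {g : H k} (hg : dist g 1 + 3 ≤ 2 ^ (k + 1)) {j : ℕ} (h : k ≤ j) :
    (c.embed k g).seq j = c.fwd h g := by
  rw [embed, dif_pos hg]
  exact dif_pos h

theorem embed_one (k : ℕ) : c.embed k 1 = 1 := by
  unfold embed
  split_ifs
  · ext j
    dsimp only
    split_ifs <;> simp [fwd_one]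
  · rfl

theorem abs_dist_embed_sub_le {k : ℕ} {g g' : H k} (hg : dist g 1 + 3 ≤ 2 ^ (k + 1))
    (hg' : dist g' 1 + 3 ≤ 2 ^ (k + 1)) :
    |dist (c.embed k g) (c.embed k g') - dist g g'| ≤ 2 * 2⁻¹ ^ k := by
  refine le_of_tendsto ((CoherentSeq.tendsto_dist _ _).sub_const _).abs ?_
  filter_upwards [eventually_ge_atTop k] with j hj
  rw [c.embed_seq hg hj, c.embed_seq hg' hj]
  exact (c.isLocAlmostIsoIso_fwd_bwd hj).abs_dist_map_sub_le (by positivity)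
    (by linarith [inv_two_pow_le_one k]) (by linarith [inv_two_pow_le_one k])

-- Pull a far term `x.seq l` back to level `k` and push it forward again.
theorem exists_dist_embed_le (x : c.CoherentSeq) {R : ℝ} (hx : dist x 1 ≤ R) {k : ℕ}
    (hk : R + 6 ≤ 2 ^ (k + 1)) :
    ∃ w : H k, dist w 1 ≤ R + 2 ∧ dist x (c.embed k w) ≤ 4 * 2⁻¹ ^ k := by
  have hpos : (0 : ℝ) < 2⁻¹ ^ k := by positivity
  obtain ⟨l, hkl, hxl, hcoh⟩ := ((eventually_ge_atTop k).and <|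
    (CoherentSeq.eventually_dist_lt (show dist x 1 < R + 1 by linarith)).and
      (x.coherent _ hpos)).exists
  rw [CoherentSeq.one_seq] at hxl
  set w := c.bwd hkl (x.seq l)
  have P := c.isLocAlmostIsoIso_fwd_bwd hkl
  have hw : dist w 1 ≤ R + 2 := by
    linarith [P.symm.dist_one_le (g := x.seq l) (by linarith), inv_two_pow_le_one k]
  have hback : dist (x.seq l) (c.fwd hkl w) ≤ 2⁻¹ ^ k :=
    P.symm.dist_comp_apply_le hpos.le (by linarith [inv_two_pow_le_one k])
  have hfw : dist (c.fwd hkl w) 1 ≤ R + 3 := by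
    linarith [P.dist_one_le (g := w) (by linarith), inv_two_pow_le_one k]
  have hcap : (2 : ℝ) ^ (k + 1) ≤ 2 ^ (l + 1) := pow_le_pow_right₀ (by norm_num) (by omega)
  have hsmall := inv_two_pow_anti hkl
  refine ⟨w, hw, CoherentSeq.dist_le_of_eventually ?_⟩
  filter_upwards [eventually_ge_atTop l] with j hlj
  rw [c.embed_seq (by linarith) (hkl.trans hlj), c.fwd_trans hkl hlj]
  have Q := (c.isLocAlmostIsoIso_fwd_bwd hlj).abs_dist_map_sub_le (g := x.seq l)
    (g' := c.fwd hkl w) (by positivity) (by linarith [inv_two_pow_le_one l])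
    (by linarith [inv_two_pow_le_one l])
  linarith [dist_triangle (x.seq j) (c.fwd hlj (x.seq l)) (c.fwd hlj (c.fwd hkl w)),
    hcoh j hlj, dist_comm (x.seq j) (c.fwd hlj (x.seq l)), (abs_le.1 Q).2]

end AlmostIsoChain

namespace AlmostIsoChain.CoherentSeq

variable {H : ℕ → Type*} [∀ k, Group (H k)] [∀ k, MetricSpace (H k)] {c : AlmostIsoChain H}

-- Diagonal argument: from level `m b` on, the terms of `u b` are close to the coherent sequence
-- they define and the distances to the earlier `u a` are almost attained; the limit takes its
-- `j`-th term from the last `u b` that is already under control at level `j`.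
theorem exists_tendsto_of_dist_lt_inv_two_pow (u : ℕ → c.CoherentSeq)
    (hu : ∀ N n n', N ≤ n → N ≤ n' → dist (u n) (u n') < 2⁻¹ ^ N) :
    ∃ y, Tendsto u atTop (𝓝 y) := by
  have hgood : ∀ b, ∀ᶠ j in atTop, b ≤ j ∧ dist ((u b).seq j) 1 ≤ dist (u b) 1 + 1 ∧
      (∀ a ∈ Set.Iic b, dist ((u a).seq j) ((u b).seq j) ≤ dist (u a) (u b) + 2⁻¹ ^ b) ∧
      ∀ l (h : j ≤ l), dist (c.fwd h ((u b).seq j)) ((u b).seq l) ≤ 2⁻¹ ^ b := fun b => by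
    have hall := (eventually_all_finite (Set.finite_Iic b)).2 fun a _ =>
      eventually_dist_lt (x := u a) (y := u b)
        (lt_add_of_pos_right _ (by positivity : (0 : ℝ) < 2⁻¹ ^ b))
    filter_upwards [eventually_ge_atTop b, eventually_dist_lt (x := u b) (y := 1) (lt_add_one _),
      hall, (u b).coherent (2⁻¹ ^ b) (by positivity)] with j h₁ h₂ h₃ h₄
    exact ⟨h₁, by simpa using h₂.le, fun a ha => (h₃ a ha).le, h₄⟩
  choose m hm using fun b => eventually_atTop.1 (hgood b)
  set I : ℕ → ℕ := fun j => Nat.findGreatest (fun b => m b ≤ j) j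
  have hI : ∀ j, m 0 ≤ j → m (I j) ≤ j := fun j hj =>
    Nat.findGreatest_spec (P := fun b => m b ≤ j) (Nat.zero_le j) hj
  have hIge : ∀ a j, m a ≤ j → a ≤ I j := fun a j h =>
    Nat.le_findGreatest ((hm a _ le_rfl).1.trans h) h
  have hdiag : ∀ a j, m 0 ≤ j → m a ≤ j →
      dist ((u a).seq j) ((u (I j)).seq j) ≤ 2 * 2⁻¹ ^ a := by
    intro a j h₀ h
    have hb := (hm (I j) j (hI j h₀)).2.2.1 a (hIge a j h)
    have := hu a a (I j) le_rfl (hIge a j h)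
    have := inv_two_pow_anti (hIge a j h)
    linarith
  refine ⟨⟨fun j => (u (I j)).seq j, ⟨dist (u 0) 1 + 2, ?_⟩, fun ε hε => ?_⟩,
    tendsto_iff_dist_tendsto_zero.2 <| squeeze_zero (g := fun a => 2 * 2⁻¹ ^ a)
      (fun _ => dist_nonneg)
      (fun a => dist_le_of_eventually ?_) ?_⟩
  · filter_upwards [eventually_ge_atTop (m 0)] with j hj
    have := hu 0 (I j) 0 (Nat.zero_le _) le_rfl
    rw [pow_zero] at this
    linarith [(hm (I j) j (hI j hj)).2.1, dist_triangle (u (I j)) (u 0) 1]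
  · obtain ⟨a, ha⟩ := (eventually_inv_two_pow_le (by positivity : 0 < ε / 3)).exists
    filter_upwards [eventually_ge_atTop (m a), eventually_ge_atTop (m 0)] with k hk hk₀ j hkj
    have hcoh := (hm (I k) k (hI k hk₀)).2.2.2 j hkj
    have hd := hdiag (I k) j (hk₀.trans hkj) ((hI k hk₀).trans hkj)
    have := inv_two_pow_anti (hIge a k hk)
    linarith [dist_triangle (c.fwd hkj ((u (I k)).seq k)) ((u (I k)).seq j) ((u (I j)).seq j)]
  · filter_upwards [eventually_ge_atTop (m a), eventually_ge_atTop (m 0)] with j hj hj₀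
    exact hdiag a j hj₀ hj
  · simpa using (tendsto_pow_atTop_nhds_zero_of_lt_one (r := (2 : ℝ)⁻¹) (by norm_num)
      (by norm_num)).const_mul 2

instance : CompleteSpace c.CoherentSeq :=
  Metric.complete_of_convergent_controlled_sequences _ (fun _ => by positivity)
    exists_tendsto_of_dist_lt_inv_two_pow

section Proper

variable [∀ k, ProperSpace (H k)]

theorem totallyBounded_closedBall (R : ℝ) :
    TotallyBounded (closedBall (1 : c.CoherentSeq) R) := by
  refine Metric.totallyBounded_iff.2 fun ε hε => ?_
  obtain ⟨k, hsmall, hk⟩ := ((eventually_inv_two_pow_le (by positivity : 0 < ε / 12)).and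
    (eventually_le_two_pow_succ (R + 6))).exists
  obtain ⟨t, hts, ht, hcover⟩ := finite_approx_of_totallyBounded
    (isCompact_closedBall (1 : H k) (R + 2)).totallyBounded (ε / 4) (by positivity)
  refine ⟨c.embed k '' t, ht.image _, fun x hx => ?_⟩
  obtain ⟨w, hw, hxw⟩ := c.exists_dist_embed_le x (mem_closedBall.1 hx) hk
  obtain ⟨y, hyt, hwy⟩ := Set.mem_iUnion₂.1 (hcover (mem_closedBall.2 hw))
  have hy := mem_closedBall.1 (hts hyt)
  have hembed := c.abs_dist_embed_sub_le (g := w) (g' := y) (by linarith) (by linarith)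
  refine Set.mem_iUnion₂.2 ⟨c.embed k y, Set.mem_image_of_mem _ hyt, mem_ball.2 ?_⟩
  linarith [dist_triangle x (c.embed k w) (c.embed k y), (abs_le.1 hembed).2, mem_ball.1 hwy]

instance : ProperSpace c.CoherentSeq where
  isCompact_closedBall x r :=
    ((totallyBounded_closedBall (r + dist x 1)).subset fun y hy => mem_closedBall.2 <| by
      linarith [mem_closedBall.1 hy, dist_triangle y x 1]).isCompact_of_isClosed isClosed_closedBall

end Proper

end AlmostIsoChain.CoherentSeq

namespace AlmostIsoChain

variable {H : ℕ → Type*} [∀ k, Group (H k)] [∀ k, MetricSpace (H k)]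
  [∀ k, IsIsometricSMul (H k) (H k)]

theorem right_equicontinuous (c : AlmostIsoChain H) {ε : ℝ} (hε : 0 < ε) :
    ∃ ω > 0, ∀ᶠ k in atTop,
      ∀ a b x : H k, dist a b < ω → dist (a * x) (b * x) < ε := by
  obtain ⟨ω, hω, h⟩ := c.inv_equicontinuous ε hε
  obtain ⟨ω', hω', h'⟩ := c.inv_equicontinuous ω hω
  exact ⟨ω', hω', (h.and h').mono fun k hk a b x hab =>
    dist_mul_right_lt_of_inv hk.1 hk.2 x hab⟩

namespace CoherentSeq

variable {c : AlmostIsoChain H}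

theorem coherent_mul (x y : c.CoherentSeq) : ∀ ε > 0, ∀ᶠ k in atTop, ∀ j (h : k ≤ j),
    dist (c.fwd h (x.seq k * y.seq k)) (x.seq j * y.seq j) ≤ ε := by
  intro ε hε
  obtain ⟨ω, hω, hright⟩ := c.right_equicontinuous (by positivity : 0 < ε / 3)
  obtain ⟨C, hC⟩ := x.bounded
  obtain ⟨C', hC'⟩ := y.bounded
  filter_upwards [hC, hC', eventually_le_two_pow_succ (C + C' + 3),
    eventually_inv_two_pow_le (by positivity : 0 < ε / 6), x.coherent (ω / 2) (by positivity),
    y.coherent (ε / 3) (by positivity), eventually_forall_ge_atTop.2 hright]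
    with k hxk hyk hcap hsmall hx hy hr j hkj
  have hmul := (c.isLocAlmostIsoIso_fwd_bwd hkj).dist_map_mul_le (g := x.seq k) (g' := y.seq k)
    (by positivity) (by linarith [dist_nonneg (x := y.seq k) (y := 1)])
    (by linarith [dist_nonneg (x := x.seq k) (y := 1)])
    (by linarith [dist_mul_one_le (x.seq k) (y.seq k), inv_two_pow_le_one k])
  have hright := hr j hkj (c.fwd hkj (x.seq k)) (x.seq j) (c.fwd hkj (y.seq k))
    (by linarith [hx j hkj])
  calc _ ≤ dist (c.fwd hkj (x.seq k * y.seq k)) (c.fwd hkj (x.seq k) * c.fwd hkj (y.seq k)) +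
        dist (c.fwd hkj (x.seq k) * c.fwd hkj (y.seq k)) (x.seq j * c.fwd hkj (y.seq k)) +
        dist (x.seq j * c.fwd hkj (y.seq k)) (x.seq j * y.seq j) := dist_triangle4 _ _ _ _
    _ ≤ ε := by rw [dist_mul_left]; linarith [hy j hkj]

theorem coherent_inv (x : c.CoherentSeq) : ∀ ε > 0, ∀ᶠ k in atTop, ∀ j (h : k ≤ j),
    dist (c.fwd h (x.seq k)⁻¹) (x.seq j)⁻¹ ≤ ε := by
  intro ε hε
  obtain ⟨ω, hω, hinv⟩ := c.inv_equicontinuous (ε / 2) (by positivity)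
  obtain ⟨C, hC⟩ := x.bounded
  filter_upwards [hC, eventually_le_two_pow_succ (C + 3),
    eventually_inv_two_pow_le (by positivity : 0 < ε / 4), x.coherent (ω / 2) (by positivity),
    eventually_forall_ge_atTop.2 hinv] with k hxk hcap hsmall hx hi j hkj
  have hmap := (c.isLocAlmostIsoIso_fwd_bwd hkj).dist_map_inv_le (g := x.seq k) (by positivity)
    (by linarith [inv_two_pow_le_one k])
  have hlim := hi j hkj (c.fwd hkj (x.seq k)) (x.seq j) (by linarith [hx j hkj])
  linarith [dist_triangle (c.fwd hkj (x.seq k)⁻¹) (c.fwd hkj (x.seq k))⁻¹ (x.seq j)⁻¹]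

instance : Mul c.CoherentSeq :=
  ⟨fun x y => ⟨x.seq * y.seq, by
    obtain ⟨C, hC⟩ := x.bounded
    obtain ⟨C', hC'⟩ := y.bounded
    exact ⟨C + C', by filter_upwards [hC, hC'] with k h h' using
      (dist_mul_one_le _ _).trans (add_le_add h h')⟩, x.coherent_mul y⟩⟩

instance : Inv c.CoherentSeq :=
  ⟨fun x => ⟨x.seq⁻¹, by simpa [dist_inv_one] using x.bounded, x.coherent_inv⟩⟩

@[simp] theorem mul_seq (x y : c.CoherentSeq) (k : ℕ) : (x * y).seq k = x.seq k * y.seq k := rfl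

instance : Group c.CoherentSeq where
  mul_assoc _ _ _ := CoherentSeq.ext (mul_assoc _ _ _)
  one_mul _ := CoherentSeq.ext (one_mul _)
  mul_one _ := CoherentSeq.ext (mul_one _)
  inv_mul_cancel _ := CoherentSeq.ext (inv_mul_cancel _)

instance : IsIsometricSMul c.CoherentSeq c.CoherentSeq :=
  ⟨fun g => Isometry.of_dist_eq fun x y => tendsto_nhds_unique (tendsto_dist (g * x) (g * y))
    (by simpa only [mul_seq, dist_mul_left] using tendsto_dist x y)⟩

theorem exists_dist_mul_right_le {ε : ℝ} (hε : 0 < ε) :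
    ∃ ω > 0, ∀ x y z : c.CoherentSeq, dist x y < ω → dist (x * z) (y * z) ≤ ε := by
  obtain ⟨ω, hω, h⟩ := c.right_equicontinuous hε
  exact ⟨ω, hω, fun x y z hxy => dist_le_of_eventually <| by
    filter_upwards [h, eventually_dist_lt hxy] with k hk hxy using (hk _ _ _ hxy).le⟩

theorem exists_dist_inv_le {ε : ℝ} (hε : 0 < ε) :
    ∃ ω > 0, ∀ x y : c.CoherentSeq, dist x y < ω → dist x⁻¹ y⁻¹ ≤ ε := by
  obtain ⟨ω, hω, h⟩ := c.inv_equicontinuous ε hε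
  exact ⟨ω, hω, fun x y hxy => dist_le_of_eventually <| by
    filter_upwards [h, eventually_dist_lt hxy] with k hk hxy using (hk _ _ hxy).le⟩

instance : IsTopologicalGroup c.CoherentSeq where
  continuous_mul := continuous_mul_of_dist_mul_right_le fun _ => exists_dist_mul_right_le
  continuous_inv := Metric.continuous_iff.2 fun x ε hε => by
    obtain ⟨ω, hω, h⟩ := exists_dist_inv_le (c := c) (half_pos hε)
    exact ⟨ω, hω, fun y hy => (h y x hy).trans_lt (half_lt_self hε)⟩

end CoherentSeq

variable (c : AlmostIsoChain H)

theorem dist_embed_mul_le {k : ℕ} {g g' : H k} (hg : dist g 1 + dist g' 1 + 3 ≤ 2 ^ (k + 1)) :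
    dist (c.embed k (g * g')) (c.embed k g * c.embed k g') ≤ 2 * 2⁻¹ ^ k := by
  have h₀ := dist_nonneg (x := g) (y := 1)
  have h₀' := dist_nonneg (x := g') (y := 1)
  have hgg' := dist_mul_one_le g g'
  refine CoherentSeq.dist_le_of_eventually ?_
  filter_upwards [eventually_ge_atTop k] with j hj
  rw [CoherentSeq.mul_seq, c.embed_seq (by linarith) hj, c.embed_seq (g := g) (by linarith) hj,
    c.embed_seq (g := g') (by linarith) hj]
  exact (c.isLocAlmostIsoIso_fwd_bwd hj).dist_map_mul_le (by positivity) (by linarith)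
    (by linarith) (by linarith [inv_two_pow_le_one k])

abbrev Limit : Type _ := SeparationQuotient c.CoherentSeq

theorem eventually_exists_isLocAlmostIsoIso {ε : ℝ} (hε : 0 < ε) (r : ℝ) :
    ∀ᶠ k in atTop, ∃ π : c.Limit → H k,
      IsLocAlmostIsoIso (fun g => SeparationQuotient.mk (c.embed k g)) π ε r := by
  obtain ⟨ω, hω, hright⟩ := CoherentSeq.exists_dist_mul_right_le (c := c) (half_pos hε)
  filter_upwards [eventually_inv_two_pow_le (by positivity : 0 < min (ε / 24) (ω / 8)),
    eventually_le_two_pow_succ (2 * r + 7), eventually_le_two_pow_succ (r + 6)]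
    with k hsmall hcap hcap'
  have hδε : 4 * (2 : ℝ)⁻¹ ^ k ≤ ε / 6 := by linarith [min_le_left (ε / 24) (ω / 8)]
  have hδω : 4 * (2 : ℝ)⁻¹ ^ k < ω := by linarith [min_le_right (ε / 24) (ω / 8)]
  obtain ⟨π, hπ⟩ :=
    exists_isLocAlmostIsoIso_of_approx (fun g => SeparationQuotient.mk (c.embed k g))
    (δ := 4 * 2⁻¹ ^ k) (η := ε / 2) (r := r) (R := r + 2) (by simp [embed_one])
    (fun a a' ha ha' => by
      rw [SeparationQuotient.dist_mk]
      exact (c.abs_dist_embed_sub_le (by linarith) (by linarith)).trans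
        (by linarith [pow_pos (by norm_num : (0 : ℝ) < 2⁻¹) k]))
    (fun a a' ha ha' => by
      rw [← SeparationQuotient.mk_mul, SeparationQuotient.dist_mk]
      exact (c.dist_embed_mul_le (by linarith)).trans
        (by linarith [pow_pos (by norm_num : (0 : ℝ) < 2⁻¹) k]))
    (fun x hx => by
      obtain ⟨z, rfl⟩ := SeparationQuotient.surjective_mk x
      rw [← SeparationQuotient.mk_one, SeparationQuotient.dist_mk] at hx
      obtain ⟨w, hw, hzw⟩ := c.exists_dist_embed_le z hx hcap'
      exact ⟨w, hw, by rwa [SeparationQuotient.dist_mk]⟩)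
    (fun x y z hxy => by
      obtain ⟨x, rfl⟩ := SeparationQuotient.surjective_mk x
      obtain ⟨y, rfl⟩ := SeparationQuotient.surjective_mk y
      obtain ⟨z, rfl⟩ := SeparationQuotient.surjective_mk z
      rw [SeparationQuotient.dist_mk] at hxy
      rw [← SeparationQuotient.mk_mul, ← SeparationQuotient.mk_mul, SeparationQuotient.dist_mk]
      exact hright x y z (hxy.trans_lt hδω))
    (by linarith)
  exact ⟨π, hπ.mono (by linarith) le_rfl⟩

end AlmostIsoChain

section Subsequence

variable {G : ℕ → Type*} [∀ n, Group (G n)] [∀ n, MetricSpace (G n)]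

theorem exists_strictMono_upsilon_lt
    (h : ∀ ε : ℝ, 0 < ε → ∃ N : ℕ, ∀ m, N ≤ m → ∀ n, N ≤ n →
      Upsilon (G m) (G n) < ε) :
    ∃ n : ℕ → ℕ, StrictMono n ∧
      ∀ k m, n k ≤ m → Upsilon (G m) (G (n k)) < 2⁻¹ ^ (k + 1) :=
  extraction_forall_of_eventually fun k => by
    obtain ⟨N, hN⟩ := h _ (by positivity : (0 : ℝ) < 2⁻¹ ^ (k + 1))
    exact eventually_atTop.2 ⟨N, fun j hj m hm => hN m (hj.trans hm) j hj⟩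

theorem AlmostIsoChain.nonempty_of_upsilon_lt {n : ℕ → ℕ} (hmono : StrictMono n)
    (hn : ∀ k m, n k ≤ m → Upsilon (G m) (G (n k)) < 2⁻¹ ^ (k + 1))
    (hequi : ∀ ε : ℝ, 0 < ε → ∃ ω : ℝ, 0 < ω ∧ ∃ N : ℕ, ∀ n, N ≤ n →
      ∀ g h : G n, dist g h < ω → dist g⁻¹ h⁻¹ < ε) :
    Nonempty (AlmostIsoChain fun k => G (n k)) := by
  choose τ σ hστ using fun k => exists_isLocAlmostIsoIso_of_upsilon_lt
    (inv_two_pow_le_sqrt_two_div_two k) (hn k (n (k + 1)) (hmono.monotone k.le_succ))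
  refine ⟨⟨σ, τ, fun k => (hστ k).symm.mono le_rfl (inv_inv_two_pow (k + 1)).ge,
    fun ε hε => ?_⟩⟩
  obtain ⟨ω, hω, N, hN⟩ := hequi ε hε
  exact ⟨ω, hω, hmono.tendsto_atTop.eventually (eventually_atTop.2 ⟨N, hN⟩)⟩

variable [∀ n, IsIsometricSMul (G n) (G n)]

theorem AlmostIsoChain.tendsto_upsilon_limit {n : ℕ → ℕ}
    (hn : ∀ k m, n k ≤ m → Upsilon (G m) (G (n k)) < 2⁻¹ ^ (k + 1))
    (c : AlmostIsoChain fun k => G (n k)) :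
    Tendsto (fun m => Upsilon (G m) c.Limit) atTop (𝓝 0) := by
  refine tendsto_order.2 ⟨fun a ha => Eventually.of_forall fun m => ha.trans_le upsilon_nonneg,
    fun a ha => ?_⟩
  obtain ⟨δ, hδ, hδa, hδ₁⟩ : ∃ δ : ℝ, 0 < δ ∧ δ < a ∧ δ ≤ 1 / 2 :=
    ⟨min a 1 / 2, by positivity, by linarith [min_le_left a 1], by linarith [min_le_right a 1]⟩
  obtain ⟨k, ⟨π, hπ⟩, hsmall, hcap⟩ :=
    ((c.eventually_exists_isLocAlmostIsoIso (half_pos hδ) (δ⁻¹ + 1)).and <|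
      (eventually_inv_two_pow_le (half_pos hδ)).and
        (eventually_le_two_pow_succ (δ⁻¹ + 2))).exists
  filter_upwards [eventually_ge_atTop (n k)] with m hm
  obtain ⟨α, β, hαβ⟩ := exists_isLocAlmostIsoIso_of_upsilon_lt
    (inv_two_pow_le_sqrt_two_div_two k) (hn k m hm)
  have hstep : (2 : ℝ)⁻¹ ^ (k + 1) ≤ 2⁻¹ ^ k := inv_two_pow_anti k.le_succ
  have hcomp := hαβ.comp hπ (by positivity) (half_pos hδ).le (s := δ⁻¹)
    (by rw [inv_inv_two_pow]; linarith) (by linarith [inv_two_pow_le_one (k + 1)])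
  exact (upsilon_le hδ (hcomp.mono (by linarith) le_rfl)).trans_lt hδa

end Subsequence

theorem upsilon_cauchy_groups_convergence_general
    (G : ℕ → Type) [∀ n, Group (G n)] [∀ n, MetricSpace (G n)]
    (h_left : ∀ n, ∀ g h k : G n, dist (g * h) (g * k) = dist h k)
    (h_proper : ∀ n, ProperSpace (G n))
    (h_cauchy : ∀ ε : ℝ, 0 < ε → ∃ N : ℕ, ∀ m, N ≤ m → ∀ n, N ≤ n →
      Upsilon (G m) (G n) < ε)
    (h_equi : ∀ ε : ℝ, 0 < ε → ∃ ω : ℝ, 0 < ω ∧ ∃ N : ℕ, ∀ n, N ≤ n →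
      ∀ g h : G n, dist g h < ω → dist g⁻¹ h⁻¹ < ε) :
    ∃ (H : Type) (_ : Group H) (_ : MetricSpace H),
      (∀ g h k : H, dist (g * h) (g * k) = dist h k) ∧
      (Continuous fun p : H × H => p.1 * p.2) ∧
      (Continuous fun g : H => g⁻¹) ∧
      ProperSpace H ∧
      Filter.Tendsto (fun n => Upsilon (G n) H) Filter.atTop (nhds 0) := by
  have (n : ℕ) : IsIsometricSMul (G n) (G n) := ⟨fun g => Isometry.of_dist_eq (h_left n g)⟩
  obtain ⟨n, hmono, hn⟩ := exists_strictMono_upsilon_lt h_cauchy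
  obtain ⟨c⟩ := AlmostIsoChain.nonempty_of_upsilon_lt hmono hn h_equi
  exact ⟨c.Limit, inferInstance, inferInstance, dist_mul_left, continuous_mul, continuous_inv,
    inferInstance, c.tendsto_upsilon_limit hn⟩

/-- A Cauchy sequence of proper metric groups for the
Gromov-Hausdorff monoid distance `Υ`, whose inverse maps are asymptotically
uniformly equicontinuous, converges for `Υ` to some proper metric group. -/
theorem upsilon_cauchy_groups_convergence
    (G : ℕ → Type) [∀ n, Group (G n)] [∀ n, MetricSpace (G n)]
    (h_left : ∀ n, ∀ g h k : G n, dist (g * h) (g * k) = dist h k)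
    (h_cont : ∀ n, Continuous fun p : G n × G n => p.1 * p.2)
    (h_inv : ∀ n, Continuous fun g : G n => g⁻¹)
    (h_proper : ∀ n, ProperSpace (G n))
    (h_cauchy : ∀ ε : ℝ, 0 < ε → ∃ N : ℕ, ∀ m, N ≤ m → ∀ n, N ≤ n →
      Upsilon (G m) (G n) < ε)
    (h_equi : ∀ ε : ℝ, 0 < ε → ∃ ω : ℝ, 0 < ω ∧ ∃ N : ℕ, ∀ n, N ≤ n →
      ∀ g h : G n, dist g h < ω → dist g⁻¹ h⁻¹ < ε) :
    ∃ (H : Type) (_ : Group H) (_ : MetricSpace H),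
      (∀ g h k : H, dist (g * h) (g * k) = dist h k) ∧
      (Continuous fun p : H × H => p.1 * p.2) ∧
      (Continuous fun g : H => g⁻¹) ∧
      ProperSpace H ∧
      Filter.Tendsto (fun n => Upsilon (G n) H) Filter.atTop (nhds 0) :=
  upsilon_cauchy_groups_convergence_general G h_left h_proper h_cauchy h_equi
end
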